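/- Let $s_0, n \geq 1$ with $m = \lceil \log_2 s_0 \rceil$, let $A_0,\dots,A_{s_0-1}$ be nonzero complex numbers, let $S_c : \{0,\dots,s_0-1\} \to \mathcal{P}(\{0,\dots,2^n-1\})$ assign column index sets, and for each $l$ let $c_l : S_c(l) \to \{0,\dots,2^n-1\}$ be injective. Define $A \in \mathbb{C}^{2^n\times 2^n}$ by $A_{ij} = A_l$ if there exists $l < s_0$ with $j \in S_c(l)$ and $i = c_l(j)$, and $A_{ij}=0$ otherwise; assume the pairs $(c_l(j), j)$ over valid $(l,j)$ are distinct so $A$ is well-defined. Let $O_c$ be a unitary on $\mathbb{C}^{2^m}\otimes\mathbb{C}^2\otimes\mathbb{C}^{2^n}$ with $O_c |l\rangle|0\rangle|j\rangle = |l\rangle|0\rangle|c_l(j)\rangle$ when $l< s_0,\ j\in S_c(l)$, and $O_c|l\rangle|0\rangle|j\rangle = |l\rangle|1\rangle|j\rangle$ otherwise. Let PREP and UNPREP be unitaries with $\mathrm{PREP}|0\rangle^{\otimes m} = \alpha^{-1/2}\sum_{l<s_0}\sqrt{A_l}|l\rangle$ and $\mathrm{UNPREP}^\dagger|0\rangle^{\otimes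 m} = \alpha^{-1/2}\sum_{l<s_0}\sqrt{A_l}^*|l\rangle$, where $\alpha = \sum_{l<s_0}|A_l|$. Then for all $i,j$, $\langle 0|^{\otimes m}\langle 0|\langle i| (\mathrm{UNPREP}\otimes I) O_c (\mathrm{PREP}\otimes I) |0\rangle^{\otimes m}|0\rangle|j\rangle = A_{ij}/\alpha$. -/

import Mathlib

/-!
Expanding the entry in the computational basis, `PREP ⊗ I` spreads `|0,0,j⟩` over the states
`|l,0,j⟩` with amplitudes `√A_l/√α`. The column oracle keeps the index register `l` fixed and either
moves `|l,0,j⟩` to `|l,0,c_l(j)⟩` or flags it in the deletion qubit, so projecting with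
`⟨0,0,i|(UNPREP ⊗ I)` picks up the amplitude `√A_l/√α` a second time exactly for the `l` with
`j ∈ S_c(l)` and `i = c_l(j)`. Since the pairs `(c_l(j), j)` are distinct there is at most one such
`l`, and the entry is `A_l/α = A_ij/α`, or `0` when there is none.
-/

open Kronecker Matrix

/-- Principal square root of a complex number. -/
noncomputable def csqrt (c : ℂ) : ℂ := c ^ (1 / 2 : ℂ)

theorem csqrt_mul_self (c : ℂ) : csqrt c * csqrt c = c := by
  rw [← sq, csqrt, one_div]
  exact_mod_cast Complex.cpow_nat_inv_pow c two_ne_zero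

theorem Matrix.kronecker_one_mul_mul_kronecker_one_apply {R α β ι ι' κ : Type*}
    [CommSemiring R] [Fintype ι] [Fintype ι'] [Fintype κ] [DecidableEq κ]
    (U : Matrix α ι R) (O : Matrix (ι × κ) (ι' × κ) R) (P : Matrix ι' β R)
    (a : α) (b : β) (x y : κ) :
    ((U ⊗ₖ (1 : Matrix κ κ R)) * O * (P ⊗ₖ (1 : Matrix κ κ R))) (a, x) (b, y) =
      ∑ l, ∑ l', U a l' * O (l', x) (l, y) * P l b := by
  simp [Matrix.mul_apply, Fintype.sum_prod_type, Matrix.kroneckerMap_apply, Matrix.one_apply,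
    Finset.sum_mul, mul_assoc]

theorem Matrix.apply_eq_of_mulVec_single_one {R m n : Type*} [Fintype n] [DecidableEq n]
    [NonAssocSemiring R] {M : Matrix m n R} {b : n} {v : m → R}
    (h : M *ᵥ Pi.single b 1 = v) (a : m) : M a b = v a := by
  rw [← h, mulVec_single_one]; rfl

theorem Matrix.apply_mul_apply_of_mulVec_single_one {R ι : Type*} [Fintype ι] [DecidableEq ι]
    [CommSemiring R] [StarRing R] {U P : Matrix ι ι R} {z : ι} {v w : ι → R}
    (hP : P *ᵥ Pi.single z 1 = v) (hU : Uᴴ *ᵥ Pi.single z 1 = w) (l : ι) :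
    U z l * P l z = star (w l) * v l := by
  rw [apply_eq_of_mulVec_single_one hP, ← apply_eq_of_mulVec_single_one hU,
    conjTranspose_apply, star_star]

def IsColumnOracle {R ι κ : Type*} [Fintype ι] [Fintype κ] [DecidableEq ι] [DecidableEq κ]
    [NonAssocSemiring R] (O : Matrix (ι × Fin 2 × κ) (ι × Fin 2 × κ) R) (p : ι → κ → Prop)
    (c : ι → κ → κ) : Prop :=
  (∀ l j, p l j → O *ᵥ Pi.single (l, 0, j) 1 = Pi.single (l, 0, c l j) 1) ∧
    ∀ l j, ¬ p l j → O *ᵥ Pi.single (l, 0, j) 1 = Pi.single (l, 1, j) 1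

theorem IsColumnOracle.apply_zero_zero {R ι κ : Type*} [Fintype ι] [Fintype κ]
    [DecidableEq ι] [DecidableEq κ] [NonAssocSemiring R]
    {O : Matrix (ι × Fin 2 × κ) (ι × Fin 2 × κ) R} {p : ι → κ → Prop} [∀ l j, Decidable (p l j)]
    {c : ι → κ → κ} (hO : IsColumnOracle O p c) (l' l : ι) (i j : κ) :
    O (l', 0, i) (l, 0, j) = if l' = l ∧ p l j ∧ i = c l j then 1 else 0 := by
  by_cases hp : p l j
  · simp [apply_eq_of_mulVec_single_one (hO.1 l j hp), Pi.single_apply, hp]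
  · simp [apply_eq_of_mulVec_single_one (hO.2 l j hp), hp]

theorem dictionary_sum_eq_apply {R κ : Type*} [AddCommMonoid R] [DecidableEq κ] {s₀ N : ℕ}
    (hN : s₀ ≤ N) {A : ℕ → R} {Sc : ℕ → Finset κ} {c : ℕ → κ → κ} {M : Matrix κ κ R}
    (hdistinct : ∀ l l' : ℕ, l < s₀ → l' < s₀ → ∀ j : κ,
      j ∈ Sc l → j ∈ Sc l' → c l j = c l' j → l = l')
    (hM₁ : ∀ l < s₀, ∀ j ∈ Sc l, M (c l j) j = A l)
    (hM₀ : ∀ i j, (¬ ∃ l, l < s₀ ∧ j ∈ Sc l ∧ i = c l j) → M i j = 0) (i j : κ) :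
    ∑ l : Fin N, (if (l : ℕ) < s₀ ∧ j ∈ Sc l ∧ i = c l j then A l else 0) = M i j := by
  rw [Fin.sum_univ_eq_sum_range (fun l => if l < s₀ ∧ j ∈ Sc l ∧ i = c l j then A l else 0)]
  by_cases hex : ∃ l, l < s₀ ∧ j ∈ Sc l ∧ i = c l j
  · obtain ⟨l₀, hl₀, hj, rfl⟩ := hex
    rw [Finset.sum_eq_single_of_mem l₀ (Finset.mem_range.2 (hl₀.trans_le hN)),
      if_pos ⟨hl₀, hj, rfl⟩, hM₁ l₀ hl₀ j hj]
    rintro l - hne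
    refine if_neg fun ⟨hl, hj', hc⟩ => hne ?_
    exact hdistinct l l₀ hl hl₀ j hj' hj hc.symm
  · rw [hM₀ i j hex]
    exact Finset.sum_eq_zero fun l _ => if_neg fun h => hex ⟨l, h⟩

theorem dictionary_block_encoding_general {s₀ n m : ℕ}
    (hm : m = Nat.clog 2 s₀)
    (A : ℕ → ℂ)
    (Sc : ℕ → Finset (Fin (2 ^ n)))
    (c : ℕ → Fin (2 ^ n) → Fin (2 ^ n))
    (hdistinct : ∀ l l' : ℕ, l < s₀ → l' < s₀ → ∀ j : Fin (2 ^ n),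
      j ∈ Sc l → j ∈ Sc l' → c l j = c l' j → l = l')
    (Amat : Matrix (Fin (2 ^ n)) (Fin (2 ^ n)) ℂ)
    (hA1 : ∀ l < s₀, ∀ j ∈ Sc l, Amat (c l j) j = A l)
    (hA0 : ∀ i j : Fin (2 ^ n), (¬ ∃ l, l < s₀ ∧ j ∈ Sc l ∧ i = c l j) → Amat i j = 0)
    (α : ℝ) (hα : α = ∑ l ∈ Finset.range s₀, ‖A l‖)
    (Oc : Matrix (Fin (2 ^ m) × Fin 2 × Fin (2 ^ n)) (Fin (2 ^ m) × Fin 2 × Fin (2 ^ n)) ℂ)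
    (hOc1 : ∀ (l : Fin (2 ^ m)) (j : Fin (2 ^ n)), (l : ℕ) < s₀ → j ∈ Sc (l : ℕ) →
      Oc.mulVec (Pi.single (l, 0, j) 1) = Pi.single (l, 0, c (l : ℕ) j) 1)
    (hOc2 : ∀ (l : Fin (2 ^ m)) (j : Fin (2 ^ n)), ¬ ((l : ℕ) < s₀ ∧ j ∈ Sc (l : ℕ)) →
      Oc.mulVec (Pi.single (l, 0, j) 1) = Pi.single (l, 1, j) 1)
    (PREP UNPREP : Matrix (Fin (2 ^ m)) (Fin (2 ^ m)) ℂ)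
    (hPREP : PREP.mulVec (Pi.single (⟨0, Nat.two_pow_pos m⟩ : Fin (2 ^ m)) 1) =
      fun l : Fin (2 ^ m) => if (l : ℕ) < s₀ then csqrt (A (l : ℕ)) / (Real.sqrt α : ℂ) else 0)
    (hUNPREP : Matrix.mulVec UNPREPᴴ (Pi.single (⟨0, Nat.two_pow_pos m⟩ : Fin (2 ^ m)) 1) =
      fun l : Fin (2 ^ m) => if (l : ℕ) < s₀ then star (csqrt (A (l : ℕ))) / (Real.sqrt α : ℂ) else 0) :
    ∀ i j : Fin (2 ^ n),
      ((UNPREP ⊗ₖ (1 : Matrix (Fin 2 × Fin (2 ^ n)) (Fin 2 × Fin (2 ^ n)) ℂ)) * Oc *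
          (PREP ⊗ₖ (1 : Matrix (Fin 2 × Fin (2 ^ n)) (Fin 2 × Fin (2 ^ n)) ℂ)))
        (⟨0, Nat.two_pow_pos m⟩, 0, i) (⟨0, Nat.two_pow_pos m⟩, 0, j)
        = Amat i j / (α : ℂ) := by
  intro i j
  have hα₀ : 0 ≤ α := hα ▸ Finset.sum_nonneg fun _ _ => norm_nonneg _
  have hamp (l : Fin (2 ^ m)) :
      UNPREP ⟨0, Nat.two_pow_pos m⟩ l * PREP l ⟨0, Nat.two_pow_pos m⟩ =
        if (l : ℕ) < s₀ then A l / α else 0 := by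
    rw [apply_mul_apply_of_mulVec_single_one hPREP hUNPREP]
    split_ifs <;>
      simp [div_mul_div_comm, csqrt_mul_self, ← Complex.ofReal_mul, Real.mul_self_sqrt hα₀]
  have hO : IsColumnOracle Oc (fun l j => (l : ℕ) < s₀ ∧ j ∈ Sc l) (fun l => c l) :=
    ⟨fun l j h => hOc1 l j h.1 h.2, hOc2⟩
  calc _ = ∑ l : Fin (2 ^ m), if (l : ℕ) < s₀ ∧ j ∈ Sc l ∧ i = c l j then A l / α else 0 := by
        rw [kronecker_one_mul_mul_kronecker_one_apply]
        simp only [hO.apply_zero_zero, ite_and, ite_mul, mul_ite, mul_one, zero_mul, mul_zero,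
          Finset.sum_ite_eq', Finset.mem_univ, if_true, hamp]
        exact Finset.sum_congr rfl fun l _ => by split_ifs <;> rfl
    _ = (∑ l : Fin (2 ^ m), if (l : ℕ) < s₀ ∧ j ∈ Sc l ∧ i = c l j then A l else 0) / α := by
        simp [Finset.sum_div, ite_div]
    _ = Amat i j / α := by
        rw [dictionary_sum_eq_apply (hm ▸ Nat.le_pow_clog one_lt_two s₀) hdistinct hA1 hA0]

/-- Theorem 3.1 (dictionary-based block encoding of sparse matrices): given the column
oracle `O_c`, the state preparation oracles `PREP`/`UNPREP` for the dictionary data of the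
sparse matrix `A`, the unitary `(UNPREP ⊗ I) O_c (PREP ⊗ I)` block-encodes `A` with
subnormalization `α = ∑_{l<s₀} |A_l|`. -/
theorem dictionary_block_encoding {s₀ n m : ℕ} (hs₀ : 1 ≤ s₀) (hn : 1 ≤ n)
    (hm : m = Nat.clog 2 s₀)
    (A : ℕ → ℂ) (hAne : ∀ l < s₀, A l ≠ 0)
    (Sc : ℕ → Finset (Fin (2 ^ n)))
    (c : ℕ → Fin (2 ^ n) → Fin (2 ^ n))
    (hinj : ∀ l < s₀, Set.InjOn (c l) (Sc l))
    (hdistinct : ∀ l l' : ℕ, l < s₀ → l' < s₀ → ∀ j : Fin (2 ^ n),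
      j ∈ Sc l → j ∈ Sc l' → c l j = c l' j → l = l')
    (Amat : Matrix (Fin (2 ^ n)) (Fin (2 ^ n)) ℂ)
    (hA1 : ∀ l < s₀, ∀ j ∈ Sc l, Amat (c l j) j = A l)
    (hA0 : ∀ i j : Fin (2 ^ n), (¬ ∃ l, l < s₀ ∧ j ∈ Sc l ∧ i = c l j) → Amat i j = 0)
    (α : ℝ) (hα : α = ∑ l ∈ Finset.range s₀, ‖A l‖)
    (Oc : Matrix (Fin (2 ^ m) × Fin 2 × Fin (2 ^ n)) (Fin (2 ^ m) × Fin 2 × Fin (2 ^ n)) ℂ)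
    (hOcU : Oc ∈ Matrix.unitaryGroup (Fin (2 ^ m) × Fin 2 × Fin (2 ^ n)) ℂ)
    (hOc1 : ∀ (l : Fin (2 ^ m)) (j : Fin (2 ^ n)), (l : ℕ) < s₀ → j ∈ Sc (l : ℕ) →
      Oc.mulVec (Pi.single (l, 0, j) 1) = Pi.single (l, 0, c (l : ℕ) j) 1)
    (hOc2 : ∀ (l : Fin (2 ^ m)) (j : Fin (2 ^ n)), ¬ ((l : ℕ) < s₀ ∧ j ∈ Sc (l : ℕ)) →
      Oc.mulVec (Pi.single (l, 0, j) 1) = Pi.single (l, 1, j) 1)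
    (PREP UNPREP : Matrix (Fin (2 ^ m)) (Fin (2 ^ m)) ℂ)
    (hPU : PREP ∈ Matrix.unitaryGroup (Fin (2 ^ m)) ℂ)
    (hUU : UNPREP ∈ Matrix.unitaryGroup (Fin (2 ^ m)) ℂ)
    (hPREP : PREP.mulVec (Pi.single (⟨0, Nat.two_pow_pos m⟩ : Fin (2 ^ m)) 1) =
      fun l : Fin (2 ^ m) => if (l : ℕ) < s₀ then csqrt (A (l : ℕ)) / (Real.sqrt α : ℂ) else 0)
    (hUNPREP : Matrix.mulVec UNPREPᴴ (Pi.single (⟨0, Nat.two_pow_pos m⟩ : Fin (2 ^ m)) 1) =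
      fun l : Fin (2 ^ m) => if (l : ℕ) < s₀ then star (csqrt (A (l : ℕ))) / (Real.sqrt α : ℂ) else 0) :
    ∀ i j : Fin (2 ^ n),
      ((UNPREP ⊗ₖ (1 : Matrix (Fin 2 × Fin (2 ^ n)) (Fin 2 × Fin (2 ^ n)) ℂ)) * Oc *
          (PREP ⊗ₖ (1 : Matrix (Fin 2 × Fin (2 ^ n)) (Fin 2 × Fin (2 ^ n)) ℂ)))
        (⟨0, Nat.two_pow_pos m⟩, 0, i) (⟨0, Nat.two_pow_pos m⟩, 0, j)
        = Amat i j / (α : ℂ) :=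
  dictionary_block_encoding_general hm A Sc c hdistinct Amat hA1 hA0 α hα Oc hOc1 hOc2 PREP UNPREP
    hPREP hUNPREP
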